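/- Let P and Q be finite posets with k = |P| ≥ 1 and P ⪯ Q, and let N = k^(2^k · k). If g_1, ..., g_N are independent uniformly random functions from the elements of Q to the elements of P, then the probability that none of g_1, ..., g_N is a witness for P ⪯ Q is at most (1 − k^(−2^k·k))^N, which is at most e^(−1). -/

import Mathlib

/-!
Fix a witness `f` for `P ⪯ Q` and, for each of the at most `2 ^ k` chains of `P` (a chain is
determined by its underlying set), one preimage chain in `Q`. These preimage chains lie in a
set `S` of at most `2 ^ k * k` points, and every total map agreeing on `S` with a total
completion of `f` is again a witness. Hence at least a fraction `k ^ (-|S|)` of all maps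
`Q → P` are witnesses, and the final bound is `(1 - 1 / N) ^ N ≤ e⁻¹`.
-/

/-- A chain in a poset: a finite sequence `(v_1, …, v_n)` with `v_i < v_j` for `i < j`,
modeled as a strictly increasing list. -/
def IsPosetChain {α : Type*} [PartialOrder α] (l : List α) : Prop :=
  l.Chain' (· < ·)

/-- A partial function `f : Q ⇀ P` (modeled as `Q → Option P`) is a witness for `P ⪯ Q`:
for every chain `(c_1, …, c_n)` in `P` there is a chain `(c'_1, …, c'_n)` in `Q`
with `f (c'_i) = c_i` for all `i`. -/
def IsChainMinorWitness {P Q : Type*} [PartialOrder P] [PartialOrder Q]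
    (f : Q → Option P) : Prop :=
  ∀ c : List P, IsPosetChain c →
    ∃ c' : List Q, IsPosetChain c' ∧ c'.map f = c.map some

/-- `P` is a chain minor of `Q` if there is a witness. -/
def ChainMinor (P Q : Type*) [PartialOrder P] [PartialOrder Q] : Prop :=
  ∃ f : Q → Option P, IsChainMinorWitness f

/-- A total function `g : Q → P` is a witness for `P ⪯ Q`: for every chain
`(c_1, …, c_n)` in `P` there is a chain `(c'_1, …, c'_n)` in `Q` with
`g (c'_i) = c_i` for all `i`. -/
def IsTotalChainMinorWitness {P Q : Type*} [PartialOrder P] [PartialOrder Q]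
    (g : Q → P) : Prop :=
  ∀ c : List P, IsPosetChain c →
    ∃ c' : List Q, IsPosetChain c' ∧ c'.map g = c

namespace IsPosetChain

variable {α : Type*} [PartialOrder α] {l l₁ l₂ : List α}

lemma pairwise (h : IsPosetChain l) : l.Pairwise (· < ·) :=
  List.isChain_iff_pairwise.mp h

lemma nodup (h : IsPosetChain l) : l.Nodup :=
  h.pairwise.imp ne_of_lt

lemma length_le_card [Fintype α] (h : IsPosetChain l) : l.length ≤ Fintype.card α :=
  h.nodup.length_le_card

lemma eq_of_toFinset_eq [DecidableEq α] (h₁ : IsPosetChain l₁) (h₂ : IsPosetChain l₂)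
    (he : l₁.toFinset = l₂.toFinset) : l₁ = l₂ :=
  (List.perm_of_nodup_nodup_toFinset_eq h₁.nodup h₂.nodup he).eq_of_pairwise'
    h₁.pairwise h₂.pairwise

end IsPosetChain

section ChainFinset

variable (α : Type*) [Fintype α] [PartialOrder α]

lemma finite_setOf_isPosetChain : {l : List α | IsPosetChain l}.Finite :=
  (List.finite_length_le α (Fintype.card α)).subset fun _ hl => IsPosetChain.length_le_card hl

noncomputable def chainFinset : Finset (List α) :=
  (finite_setOf_isPosetChain α).toFinset

variable {α}

@[simp]
lemma mem_chainFinset {l : List α} : l ∈ chainFinset α ↔ IsPosetChain l :=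
  Set.Finite.mem_toFinset _

lemma card_chainFinset_le : (chainFinset α).card ≤ 2 ^ Fintype.card α := by
  classical
  calc (chainFinset α).card ≤ (Finset.univ : Finset (Finset α)).card :=
        Finset.card_le_card_of_injOn List.toFinset (fun _ _ => Finset.mem_univ _)
          fun _ h₁ _ h₂ => IsPosetChain.eq_of_toFinset_eq (mem_chainFinset.mp h₁)
            (mem_chainFinset.mp h₂)
    _ = 2 ^ Fintype.card α := by rw [Finset.card_univ, Fintype.card_finset]

end ChainFinset

section Witness

variable {P Q : Type*} [PartialOrder P] [PartialOrder Q]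

def IsTotalChainMinorWitnessOn (g : Q → P) (S : Set Q) : Prop :=
  ∀ c, IsPosetChain c → ∃ c', IsPosetChain c' ∧ (∀ q ∈ c', q ∈ S) ∧ c'.map g = c

lemma IsTotalChainMinorWitnessOn.isTotalChainMinorWitness_of_eqOn {g₀ g : Q → P} {S : Set Q}
    (hg₀ : IsTotalChainMinorWitnessOn g₀ S) (hg : Set.EqOn g g₀ S) :
    IsTotalChainMinorWitness g := by
  intro c hc
  obtain ⟨c', hc', hc'S, rfl⟩ := hg₀ c hc
  exact ⟨c', hc', List.map_congr_left fun q hq => hg (hc'S q hq)⟩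

lemma ChainMinor.exists_small_support [Fintype P] [Nonempty P] (h : ChainMinor P Q) :
    ∃ (g₀ : Q → P) (S : Finset Q), S.card ≤ 2 ^ Fintype.card P * Fintype.card P ∧
      IsTotalChainMinorWitnessOn g₀ S := by
  classical
  obtain ⟨f, hf⟩ := h
  choose! lift hlift_chain hlift_map using hf
  refine ⟨fun q => (f q).getD (Classical.arbitrary P),
    (chainFinset P).biUnion fun c => (lift c).toFinset, ?_, fun c hc => ?_⟩
  · calc _ ≤ ∑ c ∈ chainFinset P, (lift c).toFinset.card := Finset.card_biUnion_le
      _ ≤ ∑ _c ∈ chainFinset P, Fintype.card P := Finset.sum_le_sum fun c hc => by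
          have hc := mem_chainFinset.mp hc
          calc (lift c).toFinset.card ≤ (lift c).length := List.toFinset_card_le _
            _ = c.length := by simpa using congrArg List.length (hlift_map c hc)
            _ ≤ Fintype.card P := hc.length_le_card
      _ ≤ 2 ^ Fintype.card P * Fintype.card P := by
          rw [Finset.sum_const, smul_eq_mul]
          exact Nat.mul_le_mul_right _ card_chainFinset_le
  · refine ⟨lift c, hlift_chain c hc, fun q hq => Finset.mem_biUnion.mpr
      ⟨c, mem_chainFinset.mpr hc, List.mem_toFinset.mpr hq⟩, ?_⟩
    have := congrArg (List.map fun o => o.getD (Classical.arbitrary P)) (hlift_map c hc)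
    simpa [List.map_map, Function.comp_def] using this

end Witness

lemma card_pow_le_pow_mul_card_of_eqOn {α β : Type*} [Fintype α] [DecidableEq α] [Fintype β]
    {p : (α → β) → Prop} {g₀ : α → β} (S : Finset α)
    (h : ∀ g, Set.EqOn g g₀ S → p g) :
    Fintype.card β ^ Fintype.card α ≤ Fintype.card β ^ S.card * Nat.card {g // p g} := by
  let extend : (↥(Sᶜ : Finset α) → β) → {g // p g} := fun h' =>
    ⟨fun a => if ha : a ∈ S then g₀ a else h' ⟨a, Finset.mem_compl.mpr ha⟩,
      h _ fun a ha => dif_pos ha⟩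
  have hinj : Function.Injective extend := fun h₁ h₂ he => funext fun ⟨a, ha⟩ => by
    simpa [extend, dif_neg (Finset.mem_compl.mp ha)] using congrArg (fun g => g.1 a) he
  calc Fintype.card β ^ Fintype.card α = Fintype.card β ^ S.card * Fintype.card β ^ Sᶜ.card := by
        rw [← pow_add, Finset.card_add_card_compl]
    _ ≤ Fintype.card β ^ S.card * Nat.card {g // p g} := by
        gcongr
        simpa [Finset.card_compl] using Nat.card_le_card_of_injective extend hinj

lemma card_subtype_not_div_le {X : Type*} [Fintype X] {p : X → Prop} {m : ℕ}
    (h : Fintype.card X ≤ m * Nat.card {x // p x}) :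
    (Nat.card {x // ¬ p x} : ℝ) / Fintype.card X ≤ 1 - (m : ℝ)⁻¹ := by
  classical
  have hsplit : (Nat.card {x // ¬ p x} : ℝ) = Fintype.card X - Nat.card {x // p x} := by
    rw [Nat.card_eq_fintype_card, Nat.card_eq_fintype_card, Fintype.card_subtype_compl,
      Nat.cast_sub (Fintype.card_subtype_le p)]
  rcases (Fintype.card X).eq_zero_or_pos with hX | hX
  · simpa [hX] using Nat.cast_inv_le_one m
  have hm : (0 : ℝ) < m := by
    exact_mod_cast Nat.pos_of_mul_pos_right (hX.trans_le h)
  have hX' : (0 : ℝ) < Fintype.card X := by exact_mod_cast hX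
  have hfrac : (m : ℝ)⁻¹ ≤ Nat.card {x // p x} / Fintype.card X := by
    rw [inv_eq_one_div, div_le_div_iff₀ hm hX', one_mul, mul_comm]
    exact_mod_cast h
  rw [hsplit, sub_div, div_self hX'.ne']
  linarith

lemma one_sub_zpow_neg_pow_le_exp_neg_one {k : ℕ} (hk : 1 ≤ k) (E : ℕ) :
    (1 - (k : ℝ) ^ (-(E : ℤ))) ^ (k ^ E) ≤ Real.exp (-1) := by
  have := Real.one_sub_div_pow_le_exp_neg (n := k ^ E) (t := 1)
    (by exact_mod_cast Nat.one_le_pow _ _ hk)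
  simpa [zpow_neg] using this

/-- Let `k = |P| ≥ 1`, `P ⪯ Q`, and `N = k ^ (2 ^ k * k)`. The probability that none of
`N` independent uniformly random functions `g : Q → P` is a witness for `P ⪯ Q` — which
equals `(m / k ^ |Q|) ^ N` where `m` is the number of non-witness functions — is at most
`(1 - k ^ (-2 ^ k * k)) ^ N`, which in turn is at most `e ^ (-1)`. -/
theorem error_probability_bound {P Q : Type*} [Fintype P] [PartialOrder P]
    [Fintype Q] [PartialOrder Q] (k : ℕ) (hk : k = Fintype.card P) (hk1 : 1 ≤ k)
    (h : ChainMinor P Q) (N : ℕ) (hN : N = k ^ (2 ^ k * k)) :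
    ((Nat.card {g : Q → P // ¬ IsTotalChainMinorWitness g} : ℝ)
        / (k : ℝ) ^ Fintype.card Q) ^ N
      ≤ (1 - (k : ℝ) ^ (-((2 ^ k * k : ℕ) : ℤ))) ^ N
    ∧ (1 - (k : ℝ) ^ (-((2 ^ k * k : ℕ) : ℤ))) ^ N ≤ Real.exp (-1) := by
  classical
  subst hk hN
  have : Nonempty P := Fintype.card_pos_iff.mp hk1
  obtain ⟨g₀, S, hScard, hS⟩ := h.exists_small_support
  have hcount := card_pow_le_pow_mul_card_of_eqOn S fun _ =>
    hS.isTotalChainMinorWitness_of_eqOn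
  have hratio := card_subtype_not_div_le (X := Q → P) <| by
    rw [Fintype.card_fun]
    exact hcount.trans (Nat.mul_le_mul_right _ (Nat.pow_le_pow_right hk1 hScard))
  refine ⟨pow_le_pow_left₀ (by positivity) ?_ _, one_sub_zpow_neg_pow_le_exp_neg_one hk1 _⟩
  rw [zpow_neg, zpow_natCast]
  simpa [Fintype.card_fun] using hratio
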